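/- Let 0 < R < 1, eb > 0, and N a positive natural number. Define g(t) = t - log_R(R^t + eb). If T is uniformly distributed on {1, 2, ..., N}, then the expectation E[g(T)] lies in the interval [g((N+1)/2), g(N)], i.e., (N+1)/2 - log_R(R^{(N+1)/2} + eb) ≤ E[g(T)] ≤ N - log_R(R^N + eb). -/

import Mathlib

/-!
The function `g(t) = t - log_R (R^t + eb)` has derivative `eb / (R^t + eb)`, which is positive and,
for `R < 1`, increasing in `t` because `R^t` decreases. So `g` is monotone and convex. Jensen's
inequality at the mean `(N + 1) / 2` of the uniform distribution on `{1, …, N}` gives the lower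
bound, and `g(i) ≤ g(N)` for `i ≤ N` gives the upper one.
-/

open Finset
open scoped BigOperators

noncomputable section

-- The paper's `g`, written out with `log_R y = log y / log R`.
def restartBound (R eb t : ℝ) : ℝ := t - Real.log (R ^ t + eb) / Real.log R

section restartBound

variable {R eb : ℝ}

theorem hasDerivAt_restartBound (hR0 : 0 < R) (hR1 : R ≠ 1) (heb : 0 ≤ eb) (t : ℝ) :
    HasDerivAt (restartBound R eb) (eb / (R ^ t + eb)) t := by
  have hpow : 0 < R ^ t := Real.rpow_pos_of_pos hR0 t
  have hlog : Real.log R ≠ 0 := Real.log_ne_zero_of_pos_of_ne_one hR0 hR1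
  have hlogR := (((Real.hasStrictDerivAt_const_rpow hR0 t).hasDerivAt.add_const eb).log
    (by positivity)).div_const (Real.log R)
  refine ((hasDerivAt_id' t).sub hlogR).congr_deriv ?_
  field_simp
  ring

theorem monotone_restartBound (hR0 : 0 < R) (hR1 : R ≠ 1) (heb : 0 ≤ eb) :
    Monotone (restartBound R eb) := by
  refine monotone_of_deriv_nonneg
    (fun t => (hasDerivAt_restartBound hR0 hR1 heb t).differentiableAt) fun t => ?_
  rw [(hasDerivAt_restartBound hR0 hR1 heb t).deriv]
  have hpow : 0 < R ^ t := Real.rpow_pos_of_pos hR0 t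
  positivity

theorem convexOn_restartBound (hR0 : 0 < R) (hR1 : R < 1) (heb : 0 ≤ eb) :
    ConvexOn ℝ Set.univ (restartBound R eb) := by
  have hderiv t := hasDerivAt_restartBound hR0 hR1.ne heb t
  refine MonotoneOn.convexOn_of_deriv convex_univ
    (fun t _ => (hderiv t).continuousAt.continuousWithinAt)
    (fun t _ => (hderiv t).differentiableAt.differentiableWithinAt) fun s _ t _ hst => ?_
  rw [(hderiv s).deriv, (hderiv t).deriv]
  have hRt : 0 < R ^ t := Real.rpow_pos_of_pos hR0 t
  have hRs : R ^ t ≤ R ^ s := Real.rpow_le_rpow_of_exponent_ge hR0 hR1.le hst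
  exact div_le_div_of_nonneg_left heb (by positivity) (by linarith)

end restartBound

theorem ConvexOn.map_expect_le {ι : Type*} {D : Set ℝ} {f : ℝ → ℝ} (hf : ConvexOn ℝ D f)
    {s : Finset ι} (hs : s.Nonempty) {x : ι → ℝ} (hx : ∀ i ∈ s, x i ∈ D) :
    f (𝔼 i ∈ s, x i) ≤ 𝔼 i ∈ s, f (x i) := by
  have hcard : (#s : ℝ) ≠ 0 := by exact_mod_cast hs.card_pos.ne'
  simpa only [expect_eq_sum_div_card, div_eq_inv_mul, mul_sum, smul_eq_mul] using
    hf.map_sum_le (t := s) (w := fun _ => (#s : ℝ)⁻¹) (fun _ _ => by positivity)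
      (by simp [hcard]) hx

theorem expect_Icc_one_natCast {N : ℕ} (hN : 0 < N) :
    𝔼 i ∈ Icc 1 N, (i : ℝ) = ((N : ℝ) + 1) / 2 := by
  have hsum : ∀ n : ℕ, ∑ i ∈ Icc 1 n, (i : ℝ) = n * (n + 1) / 2 := by
    intro n
    induction n with
    | zero => simp
    | succ n ih => rw [sum_Icc_succ_top (by omega), ih]; push_cast; ring
  have hNpos : (N : ℝ) ≠ 0 := by exact_mod_cast hN.ne'
  rw [expect_eq_sum_div_card, hsum, Nat.card_Icc, Nat.add_sub_cancel]
  field_simp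

theorem restartBound_le_expect_Icc_le {R eb : ℝ} (hR0 : 0 < R) (hR1 : R < 1) (heb : 0 ≤ eb)
    {N : ℕ} (hN : 0 < N) :
    restartBound R eb (((N : ℝ) + 1) / 2) ≤ 𝔼 i ∈ Icc 1 N, restartBound R eb i ∧
      𝔼 i ∈ Icc 1 N, restartBound R eb i ≤ restartBound R eb N := by
  have hIcc : (Icc 1 N).Nonempty := nonempty_Icc.2 hN
  constructor
  · rw [← expect_Icc_one_natCast hN]
    exact (convexOn_restartBound hR0 hR1 heb).map_expect_le hIcc fun _ _ => Set.mem_univ _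
  · exact expect_le hIcc fun i hi =>
      monotone_restartBound hR0 hR1.ne heb (by exact_mod_cast (mem_Icc.1 hi).2)

theorem stmt_6 (R eb : ℝ) (N : ℕ) (hR0 : 0 < R) (hR1 : R < 1) (heb : 0 < eb)
    (hN : 0 < N) :
    (((N : ℝ) + 1) / 2 - Real.log (R ^ (((N : ℝ) + 1) / 2) + eb) / Real.log R ≤
      (1 / (N : ℝ)) * ∑ i ∈ Finset.Icc 1 N,
        ((i : ℝ) - Real.log (R ^ (i : ℝ) + eb) / Real.log R)) ∧
    ((1 / (N : ℝ)) * ∑ i ∈ Finset.Icc 1 N,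
        ((i : ℝ) - Real.log (R ^ (i : ℝ) + eb) / Real.log R) ≤
      (N : ℝ) - Real.log (R ^ (N : ℝ) + eb) / Real.log R) := by
  have hmean : 𝔼 i ∈ Icc 1 N, restartBound R eb i =
      (1 / (N : ℝ)) * ∑ i ∈ Icc 1 N, restartBound R eb i := by
    rw [expect_eq_sum_div_card, Nat.card_Icc, Nat.add_sub_cancel, one_div_mul_eq_div]
  have h := restartBound_le_expect_Icc_le hR0 hR1 heb.le hN
  rwa [hmean] at h
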